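/- (Unbiasedness of MinHash signatures of length P, underlying the claim that more permutations give more accurate signatures.) Let Ω = Fin m be a finite linearly ordered universe, let A, B ⊆ Ω be nonempty finite sets, and let π₁, …, π_P be P independent uniformly random permutations of Ω. Then the expected number of coordinates on which the length-P MinHash signatures of A and B agree equals P times the Jaccard similarity: E[ #{ i ≤ P : min π_i(A) = min π_i(B) } ] = P · |A ∩ B| / |A ∪ B|. -/

import Mathlib

/-!
For a single permutation `σ`, the two minima agree exactly when the `σ`-least element of `A ∪ B`
lies in `A ∩ B`. Precomposing `σ` with the transposition of two points of `A ∪ B` exchanges them as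
candidates for this least element, so it is uniformly distributed on `A ∪ B`, and a collision has
probability `|A ∩ B| / |A ∪ B|`. Linearity of expectation over the `P` coordinates gives the
factor `P`.
-/

open Finset

theorem Finset.card_filter_mem_mul_card_of_card_fiber_eq {G β : Type*} [Fintype G] [DecidableEq β]
    {f : G → β} {S T : Finset β} (hf : ∀ g, f g ∈ S)
    (hfiber : ∀ a ∈ S, ∀ b ∈ S, #{g | f g = a} = #{g | f g = b}) (hTS : T ⊆ S) :
    #{g | f g ∈ T} * #S = #T * Fintype.card G := by
  obtain rfl | ⟨a₀, ha₀⟩ := S.eq_empty_or_nonempty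
  · have : IsEmpty G := ⟨fun g => by simpa using hf g⟩
    simp
  have card_filter_mem : ∀ U ⊆ S, #{g | f g ∈ U} = #U * #{g | f g = a₀} := fun U hU => by
    rw [← sum_card_fiberwise_eq_card_filter, sum_const_nat fun a ha => hfiber a (hU ha) a₀ ha₀]
  have card_univ_eq : Fintype.card G = #{g | f g ∈ S} := by
    rw [filter_true_of_mem fun g _ => hf g, card_univ]
  rw [card_univ_eq, card_filter_mem T hTS, card_filter_mem S subset_rfl]
  ring

theorem Fintype.sum_apply_mul_card {ι α R : Type*} [Fintype ι] [DecidableEq ι] [Fintype α]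
    [CommSemiring R] (f : α → R) (i : ι) :
    (∑ π : ι → α, f (π i)) * Fintype.card α = Fintype.card (ι → α) * ∑ a, f a := by
  have hι : Fintype.card ι ≠ 0 := Fintype.card_pos_iff.mpr ⟨i⟩ |>.ne'
  rw [← piFinset_univ, sum_piFinset_apply, Fintype.card_fun, card_univ, nsmul_eq_mul,
    mul_right_comm, Nat.cast_pow, pow_sub_one_mul (by exact_mod_cast hι), Nat.cast_pow]

theorem Fintype.sum_card_filter_apply_div_card {ι α : Type*} [Fintype ι] [DecidableEq ι]
    [Fintype α] [Nonempty α] (p : α → Prop) [DecidablePred p] :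
    (∑ π : ι → α, (#{i | p (π i)} : ℝ)) / Fintype.card (ι → α) =
      Fintype.card ι * ((#{a | p a} : ℝ) / Fintype.card α) := by
  have hcard : ∀ i : ι, (∑ π : ι → α, if p (π i) then (1 : ℝ) else 0) =
      Fintype.card (ι → α) * (∑ a, if p a then (1 : ℝ) else 0) / Fintype.card α := fun i => by
    rw [eq_div_iff (by positivity), sum_apply_mul_card (fun a => if p a then (1 : ℝ) else 0)]
  simp only [natCast_card_filter]
  rw [sum_comm]
  simp only [hcard, sum_const, card_univ, nsmul_eq_mul]
  field_simp

theorem Finset.swap_apply_mem {α : Type*} [DecidableEq α] {S : Finset α} {a b y : α}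
    (ha : a ∈ S) (hb : b ∈ S) (hy : y ∈ S) : Equiv.swap a b y ∈ S := by
  rw [Equiv.swap_apply_def]
  split_ifs <;> assumption

namespace MinHash

variable {α : Type*} [LinearOrder α]

def argmin (σ : Equiv.Perm α) (S : Finset α) (hS : S.Nonempty) : α :=
  σ.symm ((S.image σ).min' (hS.image σ))

variable {σ : Equiv.Perm α} {S : Finset α} (hS : S.Nonempty)

theorem min'_image_eq_apply_argmin : (S.image σ).min' (hS.image σ) = σ (argmin σ S hS) :=
  (σ.apply_symm_apply _).symm

theorem argmin_mem : argmin σ S hS ∈ S := by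
  obtain ⟨y, hy, hyσ⟩ := mem_image.mp ((S.image σ).min'_mem (hS.image σ))
  rwa [argmin, ← hyσ, Equiv.symm_apply_apply]

theorem apply_argmin_le {y : α} (hy : y ∈ S) : σ (argmin σ S hS) ≤ σ y := by
  rw [← min'_image_eq_apply_argmin]
  exact min'_le _ _ (mem_image_of_mem σ hy)

theorem argmin_eq_of_forall_le {x : α} (hx : x ∈ S) (hmin : ∀ y ∈ S, σ x ≤ σ y) :
    argmin σ S hS = x :=
  σ.injective (le_antisymm (apply_argmin_le hS hx) (hmin _ (argmin_mem hS)))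

theorem argmin_eq_argmin_iff {A B : Finset α} (hA : A.Nonempty) (hB : B.Nonempty) :
    argmin σ A hA = argmin σ B hB ↔
      argmin σ (A ∪ B) (hA.mono subset_union_left) ∈ A ∩ B := by
  have hAB : (A ∪ B).Nonempty := hA.mono subset_union_left
  constructor
  · intro h
    have hmin : ∀ y ∈ A ∪ B, σ (argmin σ A hA) ≤ σ y := fun y hy => by
      rcases mem_union.mp hy with hyA | hyB
      · exact apply_argmin_le hA hyA
      · exact h ▸ apply_argmin_le hB hyB
    rw [argmin_eq_of_forall_le hAB (mem_union_left B (argmin_mem hA)) hmin]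
    exact mem_inter.mpr ⟨argmin_mem hA, h ▸ argmin_mem hB⟩
  · intro h
    have hmin : ∀ y ∈ A ∪ B, σ (argmin σ (A ∪ B) hAB) ≤ σ y := fun _ => apply_argmin_le hAB
    rw [argmin_eq_of_forall_le hA (mem_inter.mp h).1 fun y hy => hmin y (mem_union_left B hy),
      argmin_eq_of_forall_le hB (mem_inter.mp h).2 fun y hy => hmin y (mem_union_right A hy)]

theorem min'_image_eq_min'_image_iff {A B : Finset α} (hA : A.Nonempty) (hB : B.Nonempty) :
    (A.image σ).min' (hA.image σ) = (B.image σ).min' (hB.image σ) ↔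
      argmin σ (A ∪ B) (hA.mono subset_union_left) ∈ A ∩ B := by
  rw [min'_image_eq_apply_argmin hA, min'_image_eq_apply_argmin hB, σ.injective.eq_iff,
    argmin_eq_argmin_iff hA hB]

theorem argmin_mul_swap {a b : α} (ha : a ∈ S) (hb : b ∈ S) :
    argmin (σ * Equiv.swap a b) S hS = Equiv.swap a b (argmin σ S hS) := by
  refine argmin_eq_of_forall_le hS (swap_apply_mem ha hb (argmin_mem hS)) fun y hy => ?_
  simpa only [Equiv.Perm.mul_apply, Equiv.swap_apply_self] using
    apply_argmin_le hS (swap_apply_mem ha hb hy)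

variable [Fintype α]

theorem card_argmin_eq_eq {a b : α} (ha : a ∈ S) (hb : b ∈ S) :
    #{σ : Equiv.Perm α | argmin σ S hS = a} = #{σ : Equiv.Perm α | argmin σ S hS = b} := by
  refine card_nbij' (· * Equiv.swap a b) (· * Equiv.swap a b) (fun σ hσ => ?_) (fun σ hσ => ?_)
    (fun σ _ => Equiv.mul_swap_mul_self a b σ) (fun σ _ => Equiv.mul_swap_mul_self a b σ)
  · simp only [coe_filter, mem_univ, true_and, Set.mem_ofPred_eq] at hσ ⊢
    rw [argmin_mul_swap hS ha hb, hσ, Equiv.swap_apply_left]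
  · simp only [coe_filter, mem_univ, true_and, Set.mem_ofPred_eq] at hσ ⊢
    rw [argmin_mul_swap hS ha hb, hσ, Equiv.swap_apply_right]

theorem card_min'_image_eq_div_card {A B : Finset α} (hA : A.Nonempty) (hB : B.Nonempty) :
    (#{σ : Equiv.Perm α | (A.image σ).min' (hA.image σ) = (B.image σ).min' (hB.image σ)} : ℝ) /
        Fintype.card (Equiv.Perm α) = (#(A ∩ B) : ℝ) / #(A ∪ B) := by
  have hAB : (A ∪ B).Nonempty := hA.mono subset_union_left
  have hcount := card_filter_mem_mul_card_of_card_fiber_eq (fun _ => argmin_mem hAB)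
    (fun a ha b hb => card_argmin_eq_eq hAB ha hb) inter_subset_union
  rw [filter_congr fun σ _ => min'_image_eq_min'_image_iff hA hB,
    div_eq_div_iff (by positivity) (by simpa using hAB.ne_empty)]
  exact_mod_cast hcount

end MinHash

/-- Unbiasedness of MinHash signatures of length `P`: for `P` independent uniformly
random permutations of `Fin m`, the expected number of coordinates on which the
length-`P` MinHash signatures of `A` and `B` agree equals `P` times the Jaccard
similarity `|A ∩ B| / |A ∪ B|`. The expectation over the uniform product
distribution is the average over all tuples of permutations. -/
theorem minhash_signature_unbiased (m P : ℕ) (A B : Finset (Fin m))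
    (hA : A.Nonempty) (hB : B.Nonempty) :
    (∑ π : Fin P → Equiv.Perm (Fin m),
        ((Finset.univ.filter (fun i : Fin P =>
          (A.image (π i)).min' (hA.image (π i)) =
            (B.image (π i)).min' (hB.image (π i)))).card : ℝ)) /
      (Fintype.card (Fin P → Equiv.Perm (Fin m)) : ℝ) =
    (P : ℝ) * (((A ∩ B).card : ℝ) / ((A ∪ B).card : ℝ)) := by
  rw [Fintype.sum_card_filter_apply_div_card fun σ : Equiv.Perm (Fin m) =>
      (A.image σ).min' (hA.image σ) = (B.image σ).min' (hB.image σ),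
    MinHash.card_min'_image_eq_div_card hA hB, Fintype.card_fin]
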